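/- arXiv:1004.3424 — 2 statements merged into one kernel-verified Lean document; each statement's English description precedes it below -/
import Mathlib

section
/- Let G be a group, and let π_* : H₁(Γ', ℤ) → H₁(Γ, ℤ)² and the subsequent maps fit into a long exact sequence H₁(Γ', ℤ) →^{π_*} H₁(Γ, ℤ)² → H₁(G, ℤ) → H₀(Γ', ℤ) → H₀(Γ, ℤ)² where the last map is the diagonal embedding ℤ → ℤ². Suppose moreover that π_* ∘ π^* is injective with finite cokernel for some map π^* : H₁(Γ, ℤ)² → H₁(Γ', ℤ). Then H₁(G, ℤ) (equivalently the abelianization G^{ab}) is finite. -/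
/-- given an exact sequence
`H₁(Γ',ℤ) → H₁(Γ,ℤ)² → H₁(G,ℤ) → H₀(Γ',ℤ) → H₀(Γ,ℤ)²` whose last map is the
(injective) diagonal `ℤ → ℤ²`, and `π_* ∘ π^*` injective with finite cokernel, the
group `H₁(G,ℤ) = G^{ab}` is finite. -/
theorem stmt2 (A B H : Type) [AddCommGroup A] [AddCommGroup B] [AddCommGroup H]
    (πs : A →+ B) (πa : B →+ A)
    (g : B →+ H) (h : H →+ ℤ) (d : ℤ →+ ℤ × ℤ)
    (hd : ∀ n : ℤ, d n = (n, n))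
    (hex1 : Function.Exact ⇑πs ⇑g) (hex2 : Function.Exact ⇑g ⇑h)
    (hex3 : Function.Exact ⇑h ⇑d) (hdinj : Function.Injective ⇑d)
    (hinj : Function.Injective ⇑(πs.comp πa))
    (hfin : Finite (B ⧸ (πs.comp πa).range)) :
    Finite H := by
  -- g is surjective
  have hg : Function.Surjective ⇑g := by
    intro x
    have hdx : d (h x) = 0 := hex3.apply_apply_eq_zero x
    have hx0 : h x = 0 := hdinj (by simpa using hdx)
    exact (hex2 x).mp hx0
  -- the composite B → H kills range (πs ∘ πa)
  have hker : (πs.comp πa).range ≤ g.ker := by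
    rintro b ⟨a, rfl⟩
    simpa using hex1.apply_apply_eq_zero (πa a)
  let φ : B ⧸ (πs.comp πa).range →+ H :=
    QuotientAddGroup.lift _ g hker
  have hφ : Function.Surjective ⇑φ := by
    intro x
    obtain ⟨b, rfl⟩ := hg x
    exact ⟨QuotientAddGroup.mk b, rfl⟩
  exact Finite.of_surjective _ hφ
end

section
/- Let G be a finite abelian group of order h, p a prime not dividing h, and W a ℤ-flat commutative ring in which every prime ℓ dividing h acts invertibly (i.e., W/ℓW = 0 for all primes ℓ | h). If W is given a ℤ[G]-module structure via a ring homomorphism χ : ℤ[G] → W, then W is flat as a ℤ[G]-module. -/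
/-!
The action map `ℤ[G] ⊗_ℤ W → W` has a `ℤ[G]`-linear section up to the factor `|G|`, namely
`w ↦ ∑_g g ⊗ g⁻¹ w`. Since `|G|` is invertible on `W`, this exhibits `W` as a retract of the base
change `ℤ[G] ⊗_ℤ W`, which is flat over `ℤ[G]` because `W` is flat over `ℤ`.
-/

open TensorProduct

theorem isUnit_natCast_of_forall_prime_dvd {R : Type*} [Semiring R] {n : ℕ} (hn : n ≠ 0)
    (h : ∀ ℓ : ℕ, ℓ.Prime → ℓ ∣ n → IsUnit (ℓ : R)) : IsUnit (n : R) := by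
  suffices ∀ d : ℕ, d ∣ n → IsUnit (d : R) from this n dvd_rfl
  intro d
  induction d using Nat.recOnMul with
  | zero => intro hd; exact absurd (Nat.eq_zero_of_zero_dvd hd) hn
  | one => simp
  | prime ℓ hℓ => exact h ℓ hℓ
  | mul a b ha hb =>
    intro hab
    rw [Nat.cast_mul]
    exact (ha (dvd_of_mul_right_dvd hab)).mul (hb (dvd_of_mul_left_dvd hab))

namespace MonoidAlgebra

variable (k : Type*) {G : Type*} [CommSemiring k] [CommGroup G] [Fintype G]
  (M : Type*) [AddCommMonoid M] [Module k M] [Module (MonoidAlgebra k G) M]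
  [IsScalarTower k (MonoidAlgebra k G) M]

noncomputable def sumTmulOfInvSMul : M →ₗ[MonoidAlgebra k G] MonoidAlgebra k G ⊗[k] M where
  toFun m := ∑ g : G, of k G g ⊗ₜ (of k G g⁻¹ • m)
  map_add' m m' := by simp only [smul_add, tmul_add, Finset.sum_add_distrib]
  map_smul' a m := by
    rw [RingHom.id_apply]
    induction a using MonoidAlgebra.induction_on with
    | of h =>
      rw [Finset.smul_sum,
        ← Equiv.sum_comp (Equiv.mulLeft h) (fun g => of k G g ⊗ₜ[k] (of k G g⁻¹ • of k G h • m))]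
      refine Finset.sum_congr rfl fun g _ => ?_
      simp [smul_tmul', smul_smul]
    | add a b ha hb => simp only [add_smul, smul_add, tmul_add, Finset.sum_add_distrib, ha, hb]
    | smul r a ha =>
      simp only [smul_assoc, smul_comm _ r, tmul_smul, ← Finset.smul_sum, ha]

theorem liftBaseChange_id_comp_sumTmulOfInvSMul :
    (LinearMap.id : M →ₗ[k] M).liftBaseChange (MonoidAlgebra k G) ∘ₗ sumTmulOfInvSMul k M =
      (Fintype.card G : Module.End (MonoidAlgebra k G) M) := by
  ext m
  simp [sumTmulOfInvSMul, smul_smul, ← one_def]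

theorem flat_of_isUnit_card [Module.Flat k M]
    (h : IsUnit (Fintype.card G : Module.End (MonoidAlgebra k G) M)) :
    Module.Flat (MonoidAlgebra k G) M := by
  obtain ⟨u, hu⟩ := h
  refine Module.Flat.of_retract (sumTmulOfInvSMul k M ∘ₗ ↑u⁻¹)
    ((LinearMap.id : M →ₗ[k] M).liftBaseChange (MonoidAlgebra k G)) ?_
  rw [← LinearMap.comp_assoc, liftBaseChange_id_comp_sumTmulOfInvSMul, ← hu]
  exact u.mul_inv

end MonoidAlgebra

theorem stmt9_general (G : Type) [CommGroup G] [Finite G]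
    (W : Type) [CommRing W] [Algebra (MonoidAlgebra ℤ G) W]
    (hflat : Module.Flat ℤ W)
    (hunit : ∀ ℓ : ℕ, ℓ.Prime → ℓ ∣ Nat.card G → IsUnit (ℓ : W)) :
    Module.Flat (MonoidAlgebra ℤ G) W := by
  have : Fintype G := Fintype.ofFinite G
  have hcard : IsUnit (Nat.card G : W) :=
    isUnit_natCast_of_forall_prime_dvd Nat.card_pos.ne' hunit
  rw [Nat.card_eq_fintype_card, ← Algebra.lmul_isUnit_iff (R := MonoidAlgebra ℤ G),
    map_natCast] at hcard
  exact MonoidAlgebra.flat_of_isUnit_card ℤ W hcard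

/-- let `G` be finite abelian of order `h`, `p ∤ h` a prime, and `W` a
`ℤ`-flat commutative ring in which every prime `ℓ ∣ h` is invertible; if `W` is a
`ℤ[G]`-algebra (module structure via a ring homomorphism `χ`), then `W` is flat over
`ℤ[G]`. -/
theorem stmt9 (p : ℕ) (hp : p.Prime) (G : Type) [CommGroup G] [Finite G]
    (hph : ¬ p ∣ Nat.card G)
    (W : Type) [CommRing W] [Algebra (MonoidAlgebra ℤ G) W]
    (hflat : Module.Flat ℤ W)
    (hunit : ∀ ℓ : ℕ, ℓ.Prime → ℓ ∣ Nat.card G → IsUnit (ℓ : W)) :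
    Module.Flat (MonoidAlgebra ℤ G) W :=
  stmt9_general G W hflat hunit
end
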